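/- NMI(𝔸,𝔻) = 1 if and only if the partitions 𝔸 and 𝔻 of {1,…,n} are equal, provided both partitions are nontrivial (i.e., H(𝔸) > 0 and H(𝔻) > 0). -/

import Mathlib

open Finset

/-- Mutual information between two partitions of `{1,…,n}`:
`I(𝔸,𝔻) = ∑_{k,j} (|C_k ∩ D_j|/n) log(n|C_k ∩ D_j|/(|C_k||D_j|))`
(empty-intersection terms vanish since `0·log 0 = 0` with `Real.log 0 = 0`). -/
noncomputable def partitionMI (n : ℕ)
    (A B : Finpartition (Finset.univ : Finset (Fin n))) : ℝ :=
  ∑ C ∈ A.parts, ∑ D ∈ B.parts,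
    (((C ∩ D).card : ℝ) / n) *
      Real.log ((n * ((C ∩ D).card : ℝ)) / ((C.card : ℝ) * (D.card : ℝ)))

/-- Entropy of a partition of `{1,…,n}`: `H(𝔸) = −∑_k (|C_k|/n) log(|C_k|/n)`. -/
noncomputable def partitionEntropy (n : ℕ)
    (A : Finpartition (Finset.univ : Finset (Fin n))) : ℝ :=
  -∑ C ∈ A.parts, ((C.card : ℝ) / n) * Real.log ((C.card : ℝ) / n)

/-! The defect `H(𝔸) - I(𝔸,𝔻)` is the conditional entropy
`H(𝔸 | 𝔻) = ∑_{k,j} (|C_k ∩ D_j|/n) log(|D_j|/|C_k ∩ D_j|)`, a sum of nonnegative terms, which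
vanishes exactly when every block of `𝔻` lies inside a block of `𝔸`. If `NMI = 1` then `I` equals
the mean of `H(𝔸)` and `H(𝔻)` while being at most each of them, so both conditional entropies
vanish and the two partitions refine each other. Conversely `I(𝔸,𝔸) = H(𝔸)`. -/

lemma Finpartition.sum_card_inter {α : Type*} [DecidableEq α] {s C : Finset α}
    (P : Finpartition s) (hC : C ⊆ s) : ∑ D ∈ P.parts, #(C ∩ D) = #C := by
  rw [← (P.restrict hC).sum_card_parts, P.sum_restrict hC card card_empty]
  simp only [inf_eq_inter, inter_comm]

section Terms

variable {α : Type*} [DecidableEq α] (n : ℕ) {C D : Finset α}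

lemma mul_log_card_div_card_inter_nonneg :
    0 ≤ (#(C ∩ D) / n : ℝ) * Real.log (#D / #(C ∩ D)) := by
  rcases (C ∩ D).eq_empty_or_nonempty with hCD | hCD
  · simp [hCD]
  have hle : (#(C ∩ D) : ℝ) ≤ #D := by exact_mod_cast card_le_card inter_subset_right
  have hpos : (0 : ℝ) < #(C ∩ D) := by exact_mod_cast hCD.card_pos
  exact mul_nonneg (by positivity) (Real.log_nonneg ((one_le_div hpos).mpr hle))

lemma mul_log_card_div_card_inter_pos (hn : 0 < n) (hCD : (C ∩ D).Nonempty) (hDC : ¬D ⊆ C) :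
    0 < (#(C ∩ D) / n : ℝ) * Real.log (#D / #(C ∩ D)) := by
  have hlt : (#(C ∩ D) : ℝ) < #D := by
    refine mod_cast card_lt_card (ssubset_of_subset_of_ne inter_subset_right fun h => hDC ?_)
    exact h ▸ inter_subset_left
  have hpos : (0 : ℝ) < #(C ∩ D) := by exact_mod_cast hCD.card_pos
  exact mul_pos (by positivity) (Real.log_pos ((one_lt_div hpos).mpr hlt))

end Terms

noncomputable def partitionCondEntropy (n : ℕ)
    (A B : Finpartition (Finset.univ : Finset (Fin n))) : ℝ :=
  ∑ C ∈ A.parts, ∑ D ∈ B.parts, (#(C ∩ D) / n : ℝ) * Real.log (#D / #(C ∩ D))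

section Partitions

variable {n : ℕ} (A B : Finpartition (Finset.univ : Finset (Fin n)))

lemma partitionMI_comm : partitionMI n A B = partitionMI n B A := by
  rw [partitionMI, partitionMI, sum_comm]
  refine sum_congr rfl fun D _ => sum_congr rfl fun C _ => ?_
  rw [inter_comm, mul_comm (#C : ℝ)]

lemma partitionEntropy_sub_partitionMI :
    partitionEntropy n A - partitionMI n A B = partitionCondEntropy n A B := by
  have hH : partitionEntropy n A =
      -∑ C ∈ A.parts, ∑ D ∈ B.parts, (#(C ∩ D) / n : ℝ) * Real.log (#C / n) := by
    simp_rw [partitionEntropy, ← sum_mul, ← sum_div, ← Nat.cast_sum,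
      B.sum_card_inter (subset_univ _)]
  rw [hH, partitionMI, partitionCondEntropy, ← sum_neg_distrib, ← sum_sub_distrib]
  refine sum_congr rfl fun C _ => ?_
  rw [← sum_neg_distrib, ← sum_sub_distrib]
  refine sum_congr rfl fun D _ => ?_
  rcases (C ∩ D).eq_empty_or_nonempty with hCD | ⟨x, hx⟩
  · simp [hCD]
  have hm : (#(C ∩ D) : ℝ) ≠ 0 := by exact_mod_cast (card_pos.mpr ⟨x, hx⟩).ne'
  have hc : (#C : ℝ) ≠ 0 := by exact_mod_cast (card_pos.mpr ⟨x, (mem_inter.mp hx).1⟩).ne'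
  have hd : (#D : ℝ) ≠ 0 := by exact_mod_cast (card_pos.mpr ⟨x, (mem_inter.mp hx).2⟩).ne'
  have hn : (n : ℝ) ≠ 0 := by exact_mod_cast x.pos.ne'
  rw [Real.log_div hd hm, Real.log_div hc hn, Real.log_div (by positivity) (by positivity),
    Real.log_mul hn hm, Real.log_mul hc hd]
  ring

lemma partitionCondEntropy_nonneg : 0 ≤ partitionCondEntropy n A B :=
  sum_nonneg fun _ _ => sum_nonneg fun _ _ => mul_log_card_div_card_inter_nonneg n

lemma partitionCondEntropy_self : partitionCondEntropy n A A = 0 := by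
  refine sum_eq_zero fun C hC => sum_eq_zero fun D hD => ?_
  obtain rfl | hne := eq_or_ne C D
  · simp
  · rw [(disjoint_iff_inter_eq_empty (s := C) (t := D)).mp (A.disjoint hC hD hne)]
    simp

lemma partitionMI_self : partitionMI n A A = partitionEntropy n A := by
  linarith [partitionEntropy_sub_partitionMI A A, partitionCondEntropy_self A]

lemma le_of_partitionCondEntropy_eq_zero (h : partitionCondEntropy n A B = 0) : B ≤ A := by
  intro D hD
  obtain ⟨x, hxD⟩ := B.nonempty_of_mem_parts hD
  obtain ⟨C, hC, hxC⟩ := A.exists_mem (mem_univ x)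
  refine ⟨C, hC, ?_⟩
  by_contra hDC
  have hterms := (sum_eq_zero_iff_of_nonneg fun _ _ =>
    sum_nonneg fun _ _ => mul_log_card_div_card_inter_nonneg n).mp h C hC
  have hterm := (sum_eq_zero_iff_of_nonneg fun _ _ =>
    mul_log_card_div_card_inter_nonneg n).mp hterms D hD
  exact (mul_log_card_div_card_inter_pos n x.pos ⟨x, mem_inter.mpr ⟨hxC, hxD⟩⟩ hDC).ne' hterm

end Partitions

theorem NMI_eq_one_iff_general (n : ℕ)
    (A B : Finpartition (Finset.univ : Finset (Fin n)))
    (hA : 0 < partitionEntropy n A) (hB : 0 < partitionEntropy n B) :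
    partitionMI n A B / ((partitionEntropy n A + partitionEntropy n B) / 2) = 1 ↔
      A = B := by
  rw [div_eq_one_iff_eq (by positivity)]
  constructor
  · intro hI
    have hAB := partitionEntropy_sub_partitionMI A B
    have hBA := partitionEntropy_sub_partitionMI B A
    rw [partitionMI_comm] at hBA
    have hAB_nonneg := partitionCondEntropy_nonneg A B
    have hBA_nonneg := partitionCondEntropy_nonneg B A
    exact le_antisymm (le_of_partitionCondEntropy_eq_zero B A (by linarith))
      (le_of_partitionCondEntropy_eq_zero A B (by linarith))
  · rintro rfl
    rw [partitionMI_self]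
    ring

/-- For nontrivial partitions (positive entropies), `NMI(𝔸,𝔻) = 1` if and only if
the two partitions are equal. -/
theorem NMI_eq_one_iff (n : ℕ) (hn : 0 < n)
    (A B : Finpartition (Finset.univ : Finset (Fin n)))
    (hA : 0 < partitionEntropy n A) (hB : 0 < partitionEntropy n B) :
    partitionMI n A B / ((partitionEntropy n A + partitionEntropy n B) / 2) = 1 ↔
      A = B :=
  NMI_eq_one_iff_general n A B hA hB
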